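/- arXiv:1202.3505 — 2 statements merged into one kernel-verified Lean document; each statement's English description precedes it below -/
import Mathlib

section
/- Let A ∈ ℝ^{n×d} of rank k with thin SVD A = U_A Σ_A V_Aᵀ, and let W ∈ ℝ^{r×n} be such that: W U_A has rank k, ‖(W U_A)⁺‖₂ ≤ 1/(1 − √(k/r)), and ‖W E‖_F ≤ ‖E‖_F where E = A X_opt − B with X_opt = A⁺B. Then the coreset solution X̃_opt = (W A)⁺ W B satisfies ‖A X̃_opt − B‖_F² ≤ (1 + 1/(1 − √(k/r))²)·‖A X_opt − B‖_F². -/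
open Matrix

noncomputable def frobSq {m n : ℕ} (M : Matrix (Fin m) (Fin n) ℝ) : ℝ :=
  ∑ i, ∑ j, (M i j) ^ 2

noncomputable def spec {m n : ℕ} (M : Matrix (Fin m) (Fin n) ℝ) : ℝ :=
  ‖LinearMap.toContinuousLinearMap (Matrix.toEuclideanLin M)‖

def IsPinv {m n : ℕ} (A : Matrix (Fin m) (Fin n) ℝ) (P : Matrix (Fin n) (Fin m) ℝ) : Prop :=
  A * P * A = A ∧ P * A * P = P ∧ (A * P)ᵀ = A * P ∧ (P * A)ᵀ = P * A

/-! Write `A = U_A M` with `M = Σ_A V_Aᵀ`, which has the right inverse `N = V_A Σ_A⁻¹` with `N M`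
symmetric. Since `W U_A` has full column rank, `(W U_A)⁺` is a left inverse of it, so
`(W A)⁺ = N (W U_A)⁺` and the coreset residual is `A X̃ - B = E - U_A (W U_A)⁺ W E`.
The normal equations give `U_Aᵀ E = 0`, so the two terms are orthogonal and, `U_A` being an
isometry, `‖A X̃ - B‖_F² = ‖E‖_F² + ‖(W U_A)⁺ W E‖_F²`. -/

theorem Matrix.mulVec_injective_of_rank_eq {K m n : Type*} [Field K] [Fintype m] [Fintype n]
    {M : Matrix m n K} (h : M.rank = Fintype.card n) : Function.Injective M.mulVec := by
  have hsum := LinearMap.finrank_range_add_finrank_ker M.mulVecLin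
  rw [← Matrix.rank, h, Module.finrank_fintype_fun_eq_card, Nat.add_eq_left] at hsum
  rw [← Matrix.coe_mulVecLin, ← LinearMap.ker_eq_bot]
  exact Submodule.finrank_eq_zero.mp hsum

namespace IsPinv

variable {m n : ℕ}

theorem unique {M : Matrix (Fin m) (Fin n) ℝ} {P Q : Matrix (Fin n) (Fin m) ℝ}
    (hP : IsPinv M P) (hQ : IsPinv M Q) : P = Q := by
  obtain ⟨p1, p2, p3, p4⟩ := hP
  obtain ⟨q1, q2, q3, q4⟩ := hQ
  have hMP : M * P = M * Q :=
    calc M * P = (M * Q * M) * P := by rw [q1]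
    _ = (M * Q)ᵀ * (M * P)ᵀ := by rw [q3, p3, Matrix.mul_assoc]
    _ = (M * P * M * Q)ᵀ := by simp only [transpose_mul, Matrix.mul_assoc]
    _ = M * Q := by rw [p1, q3]
  have hPM : P * M = Q * M :=
    calc P * M = P * (M * Q * M) := by rw [q1]
    _ = (P * M)ᵀ * (Q * M)ᵀ := by rw [q4, p4]; simp only [Matrix.mul_assoc]
    _ = (Q * (M * P * M))ᵀ := by simp only [transpose_mul, Matrix.mul_assoc]
    _ = Q * M := by rw [p1, q4]
  calc P = P * M * P := p2.symm
  _ = Q * M * Q := by rw [Matrix.mul_assoc, hMP, ← Matrix.mul_assoc, hPM]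
  _ = Q := q2

theorem mul_eq_one_of_rank_eq {M : Matrix (Fin m) (Fin n) ℝ} {P : Matrix (Fin n) (Fin m) ℝ}
    (hP : IsPinv M P) (hrank : M.rank = n) : P * M = 1 := by
  have hinj := mulVec_injective_of_rank_eq (hrank.trans (Fintype.card_fin n).symm)
  refine mulVec_injective (funext fun v => hinj ?_)
  rw [mulVec_mulVec, ← Matrix.mul_assoc, hP.1, Matrix.one_mulVec]

theorem transpose_mul_residual_eq_zero {M : Matrix (Fin m) (Fin n) ℝ}
    {P : Matrix (Fin n) (Fin m) ℝ} (hP : IsPinv M P) {p : ℕ} (B : Matrix (Fin m) (Fin p) ℝ) :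
    Mᵀ * (M * (P * B) - B) = 0 := by
  have hnormal : Mᵀ * (M * P) = Mᵀ := by
    rw [← hP.2.2.1, ← transpose_mul, hP.1]
  rw [Matrix.mul_sub, ← Matrix.mul_assoc M, ← Matrix.mul_assoc, hnormal, sub_self]

end IsPinv

theorem isPinv_mul {r k d : ℕ} {C : Matrix (Fin r) (Fin k) ℝ} {P : Matrix (Fin k) (Fin r) ℝ}
    {M : Matrix (Fin k) (Fin d) ℝ} {N : Matrix (Fin d) (Fin k) ℝ}
    (hP : IsPinv C P) (hPC : P * C = 1) (hMN : M * N = 1) (hNM : (N * M)ᵀ = N * M) :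
    IsPinv (C * M) (N * P) := by
  obtain ⟨_, _, hCP, _⟩ := hP
  have hprod : C * M * (N * P) = C * P := by
    rw [Matrix.mul_assoc, ← Matrix.mul_assoc M, hMN, Matrix.one_mul]
  refine ⟨?_, ?_, by rw [hprod, hCP], ?_⟩
  · rw [hprod, Matrix.mul_assoc, ← Matrix.mul_assoc P, hPC, Matrix.one_mul]
  · rw [Matrix.mul_assoc, hprod, Matrix.mul_assoc, ← Matrix.mul_assoc P, hPC, Matrix.one_mul]
  · rw [Matrix.mul_assoc, ← Matrix.mul_assoc P, hPC, Matrix.one_mul, hNM]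

section frobSq

variable {m n : ℕ}

theorem frobSq_eq_trace (N : Matrix (Fin m) (Fin n) ℝ) : frobSq N = (Nᵀ * N).trace := by
  simp only [frobSq, trace, diag, mul_apply, transpose_apply, sq]
  exact Finset.sum_comm

theorem frobSq_nonneg (N : Matrix (Fin m) (Fin n) ℝ) : 0 ≤ frobSq N := by
  unfold frobSq; positivity

theorem frobSq_sub_of_transpose_mul_eq_zero {X Y : Matrix (Fin m) (Fin n) ℝ}
    (h : Yᵀ * X = 0) : frobSq (X - Y) = frobSq X + frobSq Y := by
  have h' : Xᵀ * Y = 0 := by rw [← transpose_transpose Y, ← transpose_mul, h, transpose_zero]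
  simp only [frobSq_eq_trace, transpose_sub, Matrix.sub_mul, Matrix.mul_sub, trace_sub, h, h',
    trace_zero]
  ring

theorem frobSq_mul_of_transpose_mul_self_eq_one {p : ℕ} {U : Matrix (Fin m) (Fin n) ℝ}
    (hU : Uᵀ * U = 1) (Y : Matrix (Fin n) (Fin p) ℝ) : frobSq (U * Y) = frobSq Y := by
  rw [frobSq_eq_trace, frobSq_eq_trace, transpose_mul, Matrix.mul_assoc, ← Matrix.mul_assoc Uᵀ,
    hU, Matrix.one_mul]

theorem frobSq_eq_sum_norm_sq (N : Matrix (Fin m) (Fin n) ℝ) :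
    frobSq N = ∑ j, ‖WithLp.toLp 2 (Nᵀ j)‖ ^ 2 := by
  simp only [EuclideanSpace.real_norm_sq_eq, transpose_apply]
  exact Finset.sum_comm

theorem frobSq_mul_le {p : ℕ} (M : Matrix (Fin m) (Fin n) ℝ) (N : Matrix (Fin n) (Fin p) ℝ) :
    frobSq (M * N) ≤ spec M ^ 2 * frobSq N := by
  rw [frobSq_eq_sum_norm_sq, frobSq_eq_sum_norm_sq, Finset.mul_sum]
  gcongr with j
  set L := LinearMap.toContinuousLinearMap (Matrix.toEuclideanLin M)
  have hcol : WithLp.toLp 2 ((M * N)ᵀ j) = L (WithLp.toLp 2 (Nᵀ j)) := by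
    ext i; simp [L, mul_apply, mulVec, dotProduct]
  rw [hcol, ← mul_pow]
  exact pow_le_pow_left₀ (norm_nonneg _) (L.le_opNorm _) 2

end frobSq

theorem sketched_residual_eq {n k d r q : ℕ} {A : Matrix (Fin n) (Fin d) ℝ}
    {U : Matrix (Fin n) (Fin k) ℝ} {M : Matrix (Fin k) (Fin d) ℝ} {N : Matrix (Fin d) (Fin k) ℝ}
    {W : Matrix (Fin r) (Fin n) ℝ} {P : Matrix (Fin k) (Fin r) ℝ}
    (hA : A = U * M) (hMN : M * N = 1) (hPWU : P * (W * U) = 1)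
    (X : Matrix (Fin d) (Fin q) ℝ) (B : Matrix (Fin n) (Fin q) ℝ) :
    A * (N * P * (W * B)) - B = (A * X - B) - U * (P * (W * (A * X - B))) := by
  have hAN : A * (N * P * (W * B)) = U * (P * (W * B)) := by
    rw [hA]; simp only [Matrix.mul_assoc]; rw [← Matrix.mul_assoc M, hMN, Matrix.one_mul]
  have hproj : U * (P * (W * (A * X))) = A * X := by
    rw [hA, Matrix.mul_assoc U, ← Matrix.mul_assoc W, ← Matrix.mul_assoc P, hPWU, Matrix.one_mul]
  rw [hAN, Matrix.mul_sub W, Matrix.mul_sub P, Matrix.mul_sub U, hproj]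
  abel

theorem transpose_mul_eq_zero_of_eq_mul {n k d q : ℕ} {A : Matrix (Fin n) (Fin d) ℝ}
    {U : Matrix (Fin n) (Fin k) ℝ} {M : Matrix (Fin k) (Fin d) ℝ} {N : Matrix (Fin d) (Fin k) ℝ}
    {E : Matrix (Fin n) (Fin q) ℝ} (hA : A = U * M) (hMN : M * N = 1) (hAE : Aᵀ * E = 0) :
    Uᵀ * E = 0 :=
  calc Uᵀ * E = (M * N)ᵀ * (Uᵀ * E) := by rw [hMN, transpose_one, Matrix.one_mul]
  _ = Nᵀ * (Aᵀ * E) := by rw [hA, transpose_mul, transpose_mul U]; simp only [Matrix.mul_assoc]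
  _ = 0 := by rw [hAE, Matrix.mul_zero]

theorem frobenius_coreset_regression_general {n d ω r k : ℕ}
    (A : Matrix (Fin n) (Fin d) ℝ)
    (U : Matrix (Fin n) (Fin k) ℝ) (S : Matrix (Fin k) (Fin k) ℝ)
    (V : Matrix (Fin d) (Fin k) ℝ)
    (hSVD : A = U * S * Vᵀ) (hU : Uᵀ * U = 1) (hV : Vᵀ * V = 1)
    (hSinv : IsUnit S.det)
    (B : Matrix (Fin n) (Fin ω) ℝ)
    (Ap : Matrix (Fin d) (Fin n) ℝ) (hAp : IsPinv A Ap)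
    (Xopt : Matrix (Fin d) (Fin ω) ℝ) (hXopt : Xopt = Ap * B)
    (E : Matrix (Fin n) (Fin ω) ℝ) (hE : E = A * Xopt - B)
    (W : Matrix (Fin r) (Fin n) ℝ) (hrank : (W * U).rank = k)
    (Pwu : Matrix (Fin k) (Fin r) ℝ) (hPwu : IsPinv (W * U) Pwu)
    (hPwuNorm : spec Pwu ≤ 1 / (1 - Real.sqrt ((k : ℝ) / r)))
    (hWE : Real.sqrt (frobSq (W * E)) ≤ Real.sqrt (frobSq E))
    (Pwa : Matrix (Fin d) (Fin r) ℝ) (hPwa : IsPinv (W * A) Pwa)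
    (Xt : Matrix (Fin d) (Fin ω) ℝ) (hXt : Xt = Pwa * (W * B)) :
    frobSq (A * Xt - B)
      ≤ (1 + 1 / (1 - Real.sqrt ((k : ℝ) / r)) ^ 2) * frobSq (A * Xopt - B) := by
  have hA : A = U * (S * Vᵀ) := by rw [hSVD, Matrix.mul_assoc]
  have hMN : S * Vᵀ * (V * S⁻¹) = 1 := by
    rw [Matrix.mul_assoc, ← Matrix.mul_assoc Vᵀ, hV, Matrix.one_mul, mul_nonsing_inv S hSinv]
  have hNM : (V * S⁻¹ * (S * Vᵀ))ᵀ = V * S⁻¹ * (S * Vᵀ) := by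
    rw [Matrix.mul_assoc, ← Matrix.mul_assoc S⁻¹, nonsing_inv_mul S hSinv, Matrix.one_mul,
      transpose_mul, transpose_transpose]
  have hPC : Pwu * (W * U) = 1 := hPwu.mul_eq_one_of_rank_eq hrank
  have hPwa_eq : Pwa = V * S⁻¹ * Pwu :=
    hPwa.unique (by rw [hA, ← Matrix.mul_assoc]; exact isPinv_mul hPwu hPC hMN hNM)
  have hUE : Uᵀ * E = 0 := transpose_mul_eq_zero_of_eq_mul hA hMN
    (by rw [hE, hXopt]; exact hAp.transpose_mul_residual_eq_zero B)
  have hres : A * Xt - B = E - U * (Pwu * (W * E)) := by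
    rw [hXt, hPwa_eq, hE]; exact sketched_residual_eq hA hMN hPC Xopt B
  have hWE_sq : frobSq (W * E) ≤ frobSq E := (Real.sqrt_le_sqrt_iff (frobSq_nonneg _)).mp hWE
  have hspec_sq : spec Pwu ^ 2 ≤ (1 / (1 - Real.sqrt ((k : ℝ) / r))) ^ 2 :=
    pow_le_pow_left₀ (norm_nonneg _) hPwuNorm 2
  rw [← hE, hres, frobSq_sub_of_transpose_mul_eq_zero
    (by rw [transpose_mul, Matrix.mul_assoc, hUE, Matrix.mul_zero]),
    frobSq_mul_of_transpose_mul_self_eq_one hU, ← _root_.one_div_pow]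
  calc frobSq E + frobSq (Pwu * (W * E)) ≤ frobSq E + spec Pwu ^ 2 * frobSq (W * E) := by
        gcongr; exact frobSq_mul_le _ _
  _ ≤ frobSq E + (1 / (1 - Real.sqrt ((k : ℝ) / r))) ^ 2 * frobSq E :=
        add_le_add_right (mul_le_mul hspec_sq hWE_sq (frobSq_nonneg _) (sq_nonneg _)) _
  _ = _ := by ring

theorem frobenius_coreset_regression {n d ω r k : ℕ} (hr : k < r)
    (A : Matrix (Fin n) (Fin d) ℝ) (hkA : A.rank = k)
    (U : Matrix (Fin n) (Fin k) ℝ) (S : Matrix (Fin k) (Fin k) ℝ)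
    (V : Matrix (Fin d) (Fin k) ℝ)
    (hSVD : A = U * S * Vᵀ) (hU : Uᵀ * U = 1) (hV : Vᵀ * V = 1)
    (hSdiag : S.IsDiag) (hSinv : IsUnit S.det)
    (B : Matrix (Fin n) (Fin ω) ℝ)
    (Ap : Matrix (Fin d) (Fin n) ℝ) (hAp : IsPinv A Ap)
    (Xopt : Matrix (Fin d) (Fin ω) ℝ) (hXopt : Xopt = Ap * B)
    (E : Matrix (Fin n) (Fin ω) ℝ) (hE : E = A * Xopt - B)
    (W : Matrix (Fin r) (Fin n) ℝ) (hrank : (W * U).rank = k)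
    (Pwu : Matrix (Fin k) (Fin r) ℝ) (hPwu : IsPinv (W * U) Pwu)
    (hPwuNorm : spec Pwu ≤ 1 / (1 - Real.sqrt ((k : ℝ) / r)))
    (hWE : Real.sqrt (frobSq (W * E)) ≤ Real.sqrt (frobSq E))
    (Pwa : Matrix (Fin d) (Fin r) ℝ) (hPwa : IsPinv (W * A) Pwa)
    (Xt : Matrix (Fin d) (Fin ω) ℝ) (hXt : Xt = Pwa * (W * B)) :
    frobSq (A * Xt - B)
      ≤ (1 + 1 / (1 - Real.sqrt ((k : ℝ) / r)) ^ 2) * frobSq (A * Xopt - B) :=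
  frobenius_coreset_regression_general A U S V hSVD hU hV hSinv B Ap hAp Xopt hXopt E hE W hrank Pwu
    hPwu hPwuNorm hWE Pwa hPwa Xt hXt
end

section
/- Let A ∈ ℝ^{n×d} have rank k with thin SVD A = U_A Σ_A V_Aᵀ (Σ_A ∈ ℝ^{k×k} invertible diagonal, U_AᵀU_A = V_AᵀV_A = I_k), and let W ∈ ℝ^{r×n} be such that W U_A has rank k. Then (W A)⁺ W B = V_A Σ_A^{-1} (W U_A)⁺ W B for every B ∈ ℝ^{n×ω}, and consequently A · (W A)⁺ W B = U_A (W U_A)⁺ W B. -/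
open Matrix

/-- A square real matrix of full rank has unit determinant. -/
lemma isUnit_det_of_rank_eq {k : ℕ} (G : Matrix (Fin k) (Fin k) ℝ) (h : G.rank = k) :
    IsUnit G.det := by
  rw [isUnit_iff_ne_zero]
  intro hdet
  obtain ⟨v, hv, hGv⟩ := (Matrix.exists_mulVec_eq_zero_iff).mpr hdet
  have hsurj : Function.Surjective G.mulVecLin := by
    rw [← LinearMap.range_eq_top]
    apply Submodule.eq_top_of_finrank_eq
    rw [Module.finrank_fintype_fun_eq_card, Fintype.card_fin]
    exact h
  have hinj : Function.Injective G.mulVecLin :=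
    (LinearMap.injective_iff_surjective_of_finrank_eq_finrank rfl).mpr hsurj
  have : G.mulVecLin v = G.mulVecLin 0 := by
    simp [Matrix.mulVecLin_apply, hGv]
  exact hv (hinj this)

/-- Uniqueness of the Moore–Penrose pseudoinverse. -/
lemma pinv_unique {m n : ℕ} (M : Matrix (Fin m) (Fin n) ℝ)
    (P Q : Matrix (Fin n) (Fin m) ℝ) (hP : IsPinv M P) (hQ : IsPinv M Q) : P = Q := by
  obtain ⟨hP1, hP2, hP3, hP4⟩ := hP
  obtain ⟨hQ1, hQ2, hQ3, hQ4⟩ := hQ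
  have hA : M * P = M * Q := by
    calc M * P = (M * P)ᵀ := hP3.symm
    _ = Pᵀ * (M * Q * M)ᵀ := by rw [hQ1, transpose_mul]
    _ = (M * P)ᵀ * (M * Q)ᵀ := by simp only [transpose_mul, Matrix.mul_assoc]
    _ = (M * P) * (M * Q) := by rw [hP3, hQ3]
    _ = M * Q := by
        rw [show M * P * (M * Q) = (M * P * M) * Q by simp only [Matrix.mul_assoc], hP1]
  have hB : P * M = Q * M := by
    calc P * M = (P * M)ᵀ := hP4.symm
    _ = (M * Q * M)ᵀ * Pᵀ := by rw [hQ1, transpose_mul]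
    _ = (Q * M)ᵀ * (P * M)ᵀ := by simp only [transpose_mul, Matrix.mul_assoc]
    _ = (Q * M) * (P * M) := by rw [hP4, hQ4]
    _ = Q * M := by
        rw [show Q * M * (P * M) = Q * (M * P * M) by simp only [Matrix.mul_assoc], hP1]
  calc P = P * M * P := hP2.symm
  _ = P * (M * Q) := by rw [Matrix.mul_assoc, hA]
  _ = Q * M * Q := by rw [← Matrix.mul_assoc, hB]
  _ = Q := hQ2

theorem pseudoinverse_factorization {n d r k ω : ℕ}
    (A : Matrix (Fin n) (Fin d) ℝ) (hkA : A.rank = k)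
    (U : Matrix (Fin n) (Fin k) ℝ) (S : Matrix (Fin k) (Fin k) ℝ)
    (V : Matrix (Fin d) (Fin k) ℝ)
    (hSVD : A = U * S * Vᵀ) (hU : Uᵀ * U = 1) (hV : Vᵀ * V = 1)
    (hSdiag : S.IsDiag) (hSinv : IsUnit S.det)
    (W : Matrix (Fin r) (Fin n) ℝ) (hrank : (W * U).rank = k)
    (Pwa : Matrix (Fin d) (Fin r) ℝ) (hPwa : IsPinv (W * A) Pwa)
    (Pwu : Matrix (Fin k) (Fin r) ℝ) (hPwu : IsPinv (W * U) Pwu) :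
    ∀ B : Matrix (Fin n) (Fin ω) ℝ,
      Pwa * (W * B) = V * S⁻¹ * (Pwu * (W * B))
      ∧ A * (Pwa * (W * B)) = U * (Pwu * (W * B)) := by
  obtain ⟨hN1, hN2, hN3, hN4⟩ := hPwu
  have hSS : S * S⁻¹ = 1 := Matrix.mul_nonsing_inv _ hSinv
  have hSS' : S⁻¹ * S = 1 := Matrix.nonsing_inv_mul _ hSinv
  -- Pwu is a left inverse of W * U, since W * U has full column rank.
  have hG : Pwu * (W * U) = 1 := by
    have hidem : (Pwu * (W * U)) * (Pwu * (W * U)) = Pwu * (W * U) := by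
      calc (Pwu * (W * U)) * (Pwu * (W * U)) = (Pwu * (W * U) * Pwu) * (W * U) := by
            simp only [Matrix.mul_assoc]
      _ = Pwu * (W * U) := by rw [hN2]
    have hrk : (Pwu * (W * U)).rank = k := by
      refine le_antisymm (Matrix.rank_le_width _) ?_
      calc k = (W * U).rank := hrank.symm
      _ = ((W * U) * (Pwu * (W * U))).rank := by rw [← Matrix.mul_assoc, hN1]
      _ ≤ (Pwu * (W * U)).rank := Matrix.rank_mul_le_right _ _
    have hdet : IsUnit (Pwu * (W * U)).det := isUnit_det_of_rank_eq _ hrk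
    calc Pwu * (W * U)
        = (Pwu * (W * U)) * ((Pwu * (W * U)) * (Pwu * (W * U))⁻¹) := by
          rw [Matrix.mul_nonsing_inv _ hdet, Matrix.mul_one]
    _ = ((Pwu * (W * U)) * (Pwu * (W * U))) * (Pwu * (W * U))⁻¹ := by
          simp only [Matrix.mul_assoc]
    _ = (Pwu * (W * U)) * (Pwu * (W * U))⁻¹ := by rw [hidem]
    _ = 1 := Matrix.mul_nonsing_inv _ hdet
  -- helper rewrite rules in right-associated normal form
  have hVc : ∀ (p : ℕ) (X : Matrix (Fin k) (Fin p) ℝ), Vᵀ * (V * X) = X := by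
    intro p X; rw [← Matrix.mul_assoc, hV, Matrix.one_mul]
  have hSc : ∀ (p : ℕ) (X : Matrix (Fin k) (Fin p) ℝ), S * (S⁻¹ * X) = X := by
    intro p X; rw [← Matrix.mul_assoc, hSS, Matrix.one_mul]
  have hSc' : ∀ (p : ℕ) (X : Matrix (Fin k) (Fin p) ℝ), S⁻¹ * (S * X) = X := by
    intro p X; rw [← Matrix.mul_assoc, hSS', Matrix.one_mul]
  have hGc : ∀ (p : ℕ) (X : Matrix (Fin k) (Fin p) ℝ), Pwu * (W * (U * X)) = X := by
    intro p X
    calc Pwu * (W * (U * X)) = (Pwu * (W * U)) * X := by simp only [Matrix.mul_assoc]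
    _ = X := by rw [hG, Matrix.one_mul]
  have hN1c : ∀ (p : ℕ) (X : Matrix (Fin k) (Fin p) ℝ),
      W * (U * (Pwu * (W * (U * X)))) = W * (U * X) := by
    intro p X
    calc W * (U * (Pwu * (W * (U * X)))) = ((W * U) * Pwu * (W * U)) * X := by
          simp only [Matrix.mul_assoc]
    _ = (W * U) * X := by rw [hN1]
    _ = W * (U * X) := by rw [Matrix.mul_assoc]
  have hMQ : (W * A) * (V * S⁻¹ * Pwu) = (W * U) * Pwu := by
    simp only [hSVD, Matrix.mul_assoc, hVc, hSc]
  have hQM : (V * S⁻¹ * Pwu) * (W * A) = V * Vᵀ := by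
    simp only [hSVD, Matrix.mul_assoc, hGc, hSc']
  have hQpinv : IsPinv (W * A) (V * S⁻¹ * Pwu) := by
    refine ⟨?_, ?_, ?_, ?_⟩
    · rw [hMQ]
      simp only [hSVD, Matrix.mul_assoc, hN1c]
    · rw [hQM]
      simp only [Matrix.mul_assoc, hVc]
    · rw [hMQ]; exact hN3
    · rw [hQM, transpose_mul, transpose_transpose]
  have hkey : Pwa = V * S⁻¹ * Pwu := pinv_unique (W * A) Pwa (V * S⁻¹ * Pwu) hPwa hQpinv
  intro B
  constructor
  · rw [hkey, Matrix.mul_assoc]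
  · rw [hkey, hSVD]
    simp only [Matrix.mul_assoc, hVc, hSc]
end
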